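/- If G is a graph of order n, then the number of maximum independent sets of G is at most 3^(n/3) if n ≡ 0 (mod 3), at most 4·3^((n−4)/3) if n ≡ 1 (mod 3), and at most 2·3^((n−2)/3) if n ≡ 2 (mod 3). -/

import Mathlib

open SimpleGraph

/-- A set of vertices is independent if its vertices are pairwise non-adjacent. -/
def SimpleGraph.IsIndepSet' {V : Type*} (G : SimpleGraph V) (s : Set V) : Prop :=
  s.Pairwise (fun u v => ¬ G.Adj u v)

/-- The independence number of a graph. -/
noncomputable def indepNum {V : Type*} (G : SimpleGraph V) : ℕ :=
  sSup {k | ∃ s : Finset V, G.IsIndepSet' ↑s ∧ s.card = k}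

/-- The number of maximum independent sets of a graph. -/
noncomputable def numMaxIndep {V : Type*} (G : SimpleGraph V) : ℕ :=
  {s : Finset V | G.IsIndepSet' ↑s ∧ s.card = _root_.indepNum G}.ncard

/-!
Moon–Moser. Let `v` be a vertex of minimum degree `d` in the vertex set `S`. Every maximum
independent set of `G[S]` meets the closed neighbourhood `N[v]`, and deleting `u` maps the
maximum independent sets containing `u ∈ N[v]` injectively to maximum independent sets of
`G[S ∖ N[u]]`, a graph on at most `|S| - d - 1` vertices. So the count is at most
`(d + 1) h(|S| - d - 1) ≤ h(|S|)`, where `h = moonMoser` satisfies `k h(m) ≤ h(m + k)` (adjoin a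
part `k` to a partition of `m`), and `h(3q) = 3^q`, `h(3q + 2) = 2·3^q`, `h(3q + 4) = 4·3^q`.
-/

open Finset

/-- The largest product of the parts of a partition of `n`. -/
def moonMoser : ℕ → ℕ
  | 0 => 1 | 1 => 1 | 2 => 2 | 3 => 3 | 4 => 4
  | n + 5 => 3 * moonMoser (n + 2)

theorem moonMoser_add_three {m : ℕ} (hm : m ≠ 1) : moonMoser (m + 3) = 3 * moonMoser m := by
  match m, hm with
  | 0, _ => rfl
  | _ + 2, _ => rfl

theorem mul_moonMoser_le_of_lt_five {c k : ℕ}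
    (base : ∀ m < 5, c * moonMoser m ≤ moonMoser (m + k)) (m : ℕ) :
    c * moonMoser m ≤ moonMoser (m + k) := by
  induction m using Nat.strong_induction_on with
  | _ m ih =>
    obtain hm | ⟨j, rfl⟩ : m < 5 ∨ ∃ j, m = j + 5 := by
      rcases Nat.lt_or_ge m 5 with hm | hm
      · exact .inl hm
      · exact .inr ⟨m - 5, by omega⟩
    · exact base m hm
    · have hj := ih (j + 2) (by omega)
      rw [moonMoser, show j + 5 + k = j + 2 + k + 3 by omega, moonMoser_add_three (by omega),
        mul_left_comm]
      exact Nat.mul_le_mul_left 3 hj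

theorem mul_moonMoser_le_moonMoser_add (k m : ℕ) : k * moonMoser m ≤ moonMoser (m + k) := by
  induction k using Nat.strong_induction_on with
  | _ k ih =>
    rcases Nat.lt_or_ge k 5 with hk | hk
    · interval_cases k <;> exact mul_moonMoser_le_of_lt_five (by decide) m
    · calc k * moonMoser m ≤ 3 * ((k - 3) * moonMoser m) := by
            rw [← mul_assoc]; exact Nat.mul_le_mul_right _ (by omega)
        _ ≤ 3 * moonMoser (m + (k - 3)) := Nat.mul_le_mul_left 3 (ih (k - 3) (by omega))
        _ ≤ moonMoser (m + (k - 3) + 3) := mul_moonMoser_le_of_lt_five (by decide) _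
        _ = moonMoser (m + k) := by rw [show m + (k - 3) + 3 = m + k by omega]

theorem monotone_moonMoser : Monotone moonMoser :=
  monotone_nat_of_le_succ fun m => by simpa using mul_moonMoser_le_moonMoser_add 1 m

theorem moonMoser_three_mul (q : ℕ) : moonMoser (3 * q) = 3 ^ q := by
  induction q with
  | zero => rfl
  | succ q ih => rw [mul_add_one, moonMoser_add_three (by omega), ih, pow_succ, mul_comm]

theorem moonMoser_three_mul_add_two (q : ℕ) : moonMoser (3 * q + 2) = 2 * 3 ^ q := by
  induction q with
  | zero => rfl
  | succ q ih =>
    rw [show 3 * (q + 1) + 2 = 3 * q + 2 + 3 by ring, moonMoser_add_three (by omega), ih]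
    ring

theorem moonMoser_three_mul_add_four (q : ℕ) : moonMoser (3 * q + 4) = 4 * 3 ^ q := by
  induction q with
  | zero => rfl
  | succ q ih =>
    rw [show 3 * (q + 1) + 4 = 3 * q + 4 + 3 by ring, moonMoser_add_three (by omega), ih]
    ring

theorem moonMoser_le (n : ℕ) :
    (n % 3 = 0 → moonMoser n ≤ 3 ^ (n / 3)) ∧
    (n % 3 = 1 → moonMoser n ≤ 4 * 3 ^ ((n - 4) / 3)) ∧
    (n % 3 = 2 → moonMoser n ≤ 2 * 3 ^ ((n - 2) / 3)) := by
  refine ⟨fun hn => ?_, fun hn => ?_, fun hn => ?_⟩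
  · obtain ⟨q, rfl⟩ : ∃ q, n = 3 * q := ⟨n / 3, by omega⟩
    rw [moonMoser_three_mul, show 3 * q / 3 = q by omega]
  · obtain rfl | ⟨q, rfl⟩ : n = 1 ∨ ∃ q, n = 3 * q + 4 := by
      rcases Nat.lt_or_ge n 4 with h | h
      · exact .inl (by omega)
      · exact .inr ⟨(n - 4) / 3, by omega⟩
    · decide
    · rw [moonMoser_three_mul_add_four, show (3 * q + 4 - 4) / 3 = q by omega]
  · obtain ⟨q, rfl⟩ : ∃ q, n = 3 * q + 2 := ⟨n / 3, by omega⟩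
    rw [moonMoser_three_mul_add_two, show (3 * q + 2 - 2) / 3 = q by omega]

namespace SimpleGraph

variable {V : Type*} (G : SimpleGraph V)

structure IsMaximumIndepSetIn (S I : Finset V) : Prop where
  subset : I ⊆ S
  isIndepSet : G.IsIndepSet I
  maximum : ∀ J ⊆ S, G.IsIndepSet J → #J ≤ #I

open Classical in
noncomputable def maximumIndepSetsIn (S : Finset V) : Finset (Finset V) :=
  S.powerset.filter (G.IsMaximumIndepSetIn S)

theorem mem_maximumIndepSetsIn {S I : Finset V} :
    I ∈ G.maximumIndepSetsIn S ↔ G.IsMaximumIndepSetIn S I := by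
  classical
  simpa [maximumIndepSetsIn] using fun h : G.IsMaximumIndepSetIn S I => h.subset

def nonNbrsIn [DecidableEq V] [DecidableRel G.Adj] (S : Finset V) (u : V) : Finset V :=
  S.filter fun w => ¬(w = u ∨ G.Adj u w)

variable {G}

theorem IsMaximumIndepSetIn.exists_mem_eq_or_adj {S I : Finset V}
    (hI : G.IsMaximumIndepSetIn S I) {v : V} (hv : v ∈ S) : ∃ u ∈ I, u = v ∨ G.Adj v u := by
  classical
  by_contra! hfar
  have hvI : v ∉ I := fun h => (hfar v h).1 rfl
  have hind : G.IsIndepSet (insert v I : Finset V) := by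
    rw [coe_insert]
    exact hI.isIndepSet.insert fun w hw _ =>
      ⟨(hfar w hw).2, fun h => (hfar w hw).2 h.symm⟩
  have := hI.maximum _ (insert_subset hv hI.subset) hind
  rw [card_insert_of_notMem hvI] at this
  omega

theorem IsMaximumIndepSetIn.erase [DecidableEq V] [DecidableRel G.Adj] {S I : Finset V}
    (hI : G.IsMaximumIndepSetIn S I) {u : V} (hu : u ∈ I) :
    G.IsMaximumIndepSetIn (G.nonNbrsIn S u) (I.erase u) where
  subset w hw := by
    obtain ⟨hwu, hwI⟩ := mem_erase.1 hw
    exact mem_filter.2 ⟨hI.subset hwI, not_or.2 ⟨hwu, hI.isIndepSet hu hwI (Ne.symm hwu)⟩⟩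
  isIndepSet := hI.isIndepSet.mono (coe_subset.2 (erase_subset u I))
  maximum J hJ hind := by
    have huJ : u ∉ J := fun h => (mem_filter.1 (hJ h)).2 (.inl rfl)
    have hins : G.IsIndepSet (insert u J : Finset V) := by
      rw [coe_insert]
      refine hind.insert fun w hw _ => ?_
      have hadj := not_or.1 (mem_filter.1 (hJ hw)).2
      exact ⟨hadj.2, fun h => hadj.2 h.symm⟩
    have := hI.maximum _ (insert_subset (hI.subset hu) fun w hw => (mem_filter.1 (hJ hw)).1) hins
    rw [card_insert_of_notMem huJ] at this
    rw [card_erase_of_mem hu]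
    omega

variable (G)

theorem card_filter_mem_maximumIndepSetsIn_le [DecidableEq V] [DecidableRel G.Adj]
    (S : Finset V) (u : V) :
    #{I ∈ G.maximumIndepSetsIn S | u ∈ I} ≤ #(G.maximumIndepSetsIn (G.nonNbrsIn S u)) := by
  refine card_le_card_of_injOn (·.erase u) (fun I hI => ?_) fun I hI J hJ => ?_
  · obtain ⟨hmax, hu⟩ := mem_filter.1 hI
    exact (G.mem_maximumIndepSetsIn).2 (((G.mem_maximumIndepSetsIn).1 hmax).erase hu)
  · exact erase_injOn' u (mem_filter.1 hI).2 (mem_filter.1 hJ).2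

theorem card_maximumIndepSetsIn_le (S : Finset V) :
    #(G.maximumIndepSetsIn S) ≤ moonMoser #S := by
  classical
  induction hS : #S using Nat.strong_induction_on generalizing S with
  | _ n ih =>
    subst hS
    obtain rfl | hne := S.eq_empty_or_nonempty
    · exact (card_le_card (filter_subset _ _)).trans (by simp [moonMoser])
    -- `v` has minimum degree in `G[S]`
    obtain ⟨v, hvS, hv⟩ := exists_max_image S (fun u => #(G.nonNbrsIn S u)) hne
    set N := S.filter fun w => w = v ∨ G.Adj v w
    have hcard : #S = #(G.nonNbrsIn S v) + #N := by
      rw [add_comm]; exact (card_filter_add_card_filter_not _).symm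
    have hcover :
        G.maximumIndepSetsIn S ⊆ N.biUnion fun u => {I ∈ G.maximumIndepSetsIn S | u ∈ I} := by
      intro I hI
      obtain ⟨u, huI, hu⟩ := ((G.mem_maximumIndepSetsIn).1 hI).exists_mem_eq_or_adj hvS
      exact mem_biUnion.2 ⟨u, mem_filter.2 ⟨((G.mem_maximumIndepSetsIn).1 hI).subset huI, hu⟩,
        mem_filter.2 ⟨hI, huI⟩⟩
    have hfiber : ∀ u ∈ N,
        #{I ∈ G.maximumIndepSetsIn S | u ∈ I} ≤ moonMoser #(G.nonNbrsIn S v) := by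
      intro u hu
      have huS := (mem_filter.1 hu).1
      have hlt : #(G.nonNbrsIn S u) < #S :=
        card_lt_card ⟨filter_subset _ _, fun h => (mem_filter.1 (h huS)).2 (.inl rfl)⟩
      exact (card_filter_mem_maximumIndepSetsIn_le G S u).trans
        ((ih _ hlt _ rfl).trans (monotone_moonMoser (hv u huS)))
    calc #(G.maximumIndepSetsIn S)
        ≤ ∑ u ∈ N, #{I ∈ G.maximumIndepSetsIn S | u ∈ I} :=
          (card_le_card hcover).trans card_biUnion_le
      _ ≤ #N * moonMoser #(G.nonNbrsIn S v) := by
        simpa using sum_le_sum hfiber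
      _ ≤ moonMoser #S := hcard ▸ mul_moonMoser_le_moonMoser_add _ _

theorem isMaximumIndepSetIn_univ_iff [Fintype V] {I : Finset V} :
    G.IsMaximumIndepSetIn univ I ↔ G.IsMaximumIndepSet I :=
  ⟨fun h => ⟨h.isIndepSet, fun J hJ => h.maximum J (subset_univ J) hJ⟩,
    fun h => ⟨subset_univ I, h.isIndepSet, fun J _ hJ => h.maximum J hJ⟩⟩

end SimpleGraph

theorem indepNum_eq_indepNum {V : Type*} (G : SimpleGraph V) : _root_.indepNum G = G.indepNum := by
  simp only [_root_.indepNum, SimpleGraph.indepNum, isNIndepSet_iff]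
  rfl

theorem numMaxIndep_eq_card_maximumIndepSetsIn_univ {V : Type*} [Fintype V] (G : SimpleGraph V) :
    numMaxIndep G = #(G.maximumIndepSetsIn univ) := by
  rw [numMaxIndep, ← Set.ncard_coe_finset]
  congr 1
  ext I
  rw [Set.mem_ofPred_eq, mem_coe, mem_maximumIndepSetsIn, isMaximumIndepSetIn_univ_iff,
    indepNum_eq_indepNum]
  exact ⟨fun ⟨hind, hcard⟩ => ⟨hind, fun J hJ => hcard ▸ hJ.card_le_indepNum⟩,
    fun h => ⟨h.isIndepSet, maximumIndepSet_card_eq_indepNum I h⟩⟩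

theorem stmt17 {V : Type*} [Fintype V] (G : SimpleGraph V) (n : ℕ)
    (hn : Fintype.card V = n) :
    (n % 3 = 0 → numMaxIndep G ≤ 3 ^ (n / 3)) ∧
    (n % 3 = 1 → numMaxIndep G ≤ 4 * 3 ^ ((n - 4) / 3)) ∧
    (n % 3 = 2 → numMaxIndep G ≤ 2 * 3 ^ ((n - 2) / 3)) := by
  have hcount : numMaxIndep G ≤ moonMoser n := by
    rw [numMaxIndep_eq_card_maximumIndepSetsIn_univ, ← hn, ← card_univ]
    exact G.card_maximumIndepSetsIn_le univ
  obtain ⟨h0, h1, h2⟩ := moonMoser_le n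
  exact ⟨fun h => hcount.trans (h0 h), fun h => hcount.trans (h1 h),
    fun h => hcount.trans (h2 h)⟩
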